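/- Let B be a commutative ring with an element ε satisfying ε² = 1, and let A = T(Bⁿ)/⟨eᵢ⊗eᵢ, eᵢ⊗eⱼ − ε eⱼ⊗eᵢ (i≠j)⟩ be the ε-exterior algebra. For 0 ≤ d ≤ n, let Λᵈ denote the B-submodule of A spanned by {e_I : I ⊆ [n], |I| = d}. Then A = ⊕_{d=0}^{n} Λᵈ as B-modules, i.e., the canonical map ⊕_{d=0}^{n} Λᵈ → A is an isomorphism. -/

import Mathlib

noncomputable section

open TensorAlgebra

/-- The `i`-th standard basis vector of the free module `Bⁿ`. -/
def stdB (B : Type*) [CommRing B] (n : ℕ) (i : Fin n) : Fin n → B := Pi.single i 1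

/-- The generating relations of the ε-exterior algebra:
`eᵢ ⊗ eᵢ = 0` and `eᵢ ⊗ eⱼ = ε • (eⱼ ⊗ eᵢ)` for `i ≠ j`. -/
inductive epsRel (B : Type*) [CommRing B] (n : ℕ) (ε : B) :
    TensorAlgebra B (Fin n → B) → TensorAlgebra B (Fin n → B) → Prop
  | sq (i : Fin n) :
      epsRel B n ε (ι B (stdB B n i) * ι B (stdB B n i)) 0
  | swap {i j : Fin n} (h : i ≠ j) :
      epsRel B n ε (ι B (stdB B n i) * ι B (stdB B n j))
        (ε • (ι B (stdB B n j) * ι B (stdB B n i)))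

/-- The ε-exterior algebra: the quotient of the tensor algebra `T(Bⁿ)` by the
two-sided ideal generated by the relations `epsRel`. -/
abbrev EpsExt (B : Type*) [CommRing B] (n : ℕ) (ε : B) : Type _ :=
  RingQuot (epsRel B n ε)

/-- The image of the basis vector `eᵢ` in the ε-exterior algebra. -/
def epsGen (B : Type*) [CommRing B] (n : ℕ) (ε : B) (i : Fin n) : EpsExt B n ε :=
  RingQuot.mkAlgHom B (epsRel B n ε) (ι B (stdB B n i))

/-- `e_I = e_{i₁} ⋯ e_{i_d}` for `I = {i₁ < ⋯ < i_d}` (with `e_∅ = 1`). -/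
def eI (B : Type*) [CommRing B] (n : ℕ) (ε : B) (I : Finset (Fin n)) : EpsExt B n ε :=
  ((I.sort (· ≤ ·)).map (epsGen B n ε)).prod

/-- The `d`-th exterior power: the `B`-submodule of the ε-exterior algebra spanned
by the `e_I` with `|I| = d`. -/
def epsPower (B : Type*) [CommRing B] (n : ℕ) (ε : B) (d : ℕ) :
    Submodule B (EpsExt B n ε) :=
  Submodule.span B {x | ∃ I : Finset (Fin n), I.card = d ∧ x = eI B n ε I}

/-!
Let `M` be the free `B`-module with basis the subsets `I ⊆ [n]`, and let `eᵢ` act on `M` by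
`I ↦ 0` if `i ∈ I` and `I ↦ ε^#{j ∈ I | j < i} · (I ∪ {i})` otherwise. These operators
square to zero and ε-commute (the latter because `ε² = 1`), so `M` is a module over the
ε-exterior algebra `A`, and `e_I` sends the basis vector `∅` to `I`; hence the `e_I` are
linearly independent in `A`. The same straightening rule in `A` shows that their span is
stable under left multiplication by generators and contains `1`, so it is all of `A`. A basis
partitioned by `|I|` splits `A` into the spans of its parts.
-/

theorem LinearIndependent.isInternal_span_image_fiber {ι κ R M : Type*} [DecidableEq κ] [Ring R]
    [AddCommGroup M] [Module R M] {v : ι → M} (hv : LinearIndependent R v)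
    (hspan : Submodule.span R (Set.range v) = ⊤) (f : ι → κ) :
    DirectSum.IsInternal fun k => Submodule.span R (v '' (f ⁻¹' {k})) := by
  refine DirectSum.isInternal_submodule_of_iSupIndep_of_iSup_eq_top (fun k => ?_) ?_
  · rw [← Submodule.span_iUnion₂, ← Set.image_iUnion₂]
    refine hv.disjoint_span_image (Set.disjoint_iUnion₂_right.mpr fun j hj => ?_)
    exact Set.disjoint_singleton.mpr (Ne.symm hj) |>.preimage f
  · rw [Submodule.iSup_span, ← Set.image_iUnion, ← Set.preimage_iUnion, Set.iUnion_of_singleton,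
      Set.preimage_univ, Set.image_univ, hspan]

namespace EpsExt

variable {B : Type*} [CommRing B] {n : ℕ} (ε : B)

lemma epsGen_mul_self (i : Fin n) : epsGen B n ε i * epsGen B n ε i = 0 := by
  simpa [epsGen] using RingQuot.mkAlgHom_rel B (epsRel.sq (B := B) (n := n) (ε := ε) i)

lemma epsGen_mul_epsGen_of_ne {i j : Fin n} (h : i ≠ j) :
    epsGen B n ε i * epsGen B n ε j = ε • (epsGen B n ε j * epsGen B n ε i) := by
  simpa [epsGen] using RingQuot.mkAlgHom_rel B (epsRel.swap (B := B) (n := n) (ε := ε) h)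

lemma eI_empty : eI B n ε ∅ = 1 := by
  simp [eI]

lemma eI_insert_of_forall_lt {a : Fin n} {s : Finset (Fin n)} (ha : ∀ x ∈ s, a < x) :
    eI B n ε (insert a s) = epsGen B n ε a * eI B n ε s := by
  rw [eI, Finset.sort_insert _ (fun x hx => (ha x hx).le) fun h => lt_irrefl a (ha a h)]
  rfl

lemma card_filter_lt_insert {j : Fin n} {s : Finset (Fin n)} (hj : j ∉ s) (i : Fin n) :
    ((insert j s).filter (· < i)).card = (s.filter (· < i)).card + if j < i then 1 else 0 := by
  rw [Finset.filter_insert]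
  split_ifs
  · exact Finset.card_insert_of_notMem fun h => hj (Finset.mem_of_mem_filter _ h)
  · rfl

lemma epsGen_mul_eI (i : Fin n) (I : Finset (Fin n)) :
    epsGen B n ε i * eI B n ε I =
      if i ∈ I then 0 else ε ^ (I.filter (· < i)).card • eI B n ε (insert i I) := by
  induction I using Finset.induction_on_min with
  | empty => simpa [eI_empty] using (eI_insert_of_forall_lt ε (a := i) (s := ∅) (by simp)).symm
  | insert a s ha ih =>
    have has : a ∉ s := fun h => lt_irrefl a (ha a h)
    rw [eI_insert_of_forall_lt ε ha]
    rcases lt_trichotomy i a with hia | rfl | hai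
    · have hlt : ∀ x ∈ insert a s, i < x := by
        simpa [hia] using fun x hx => hia.trans (ha x hx)
      rw [if_neg fun h => lt_irrefl i (hlt i h),
        Finset.filter_eq_empty_iff.mpr fun x hx => (hlt x hx).not_gt, Finset.card_empty,
        pow_zero, one_smul, eI_insert_of_forall_lt ε hlt, eI_insert_of_forall_lt ε ha]
    · rw [← mul_assoc, epsGen_mul_self, zero_mul, if_pos (Finset.mem_insert_self _ _)]
    · rw [← mul_assoc, epsGen_mul_epsGen_of_ne ε hai.ne', smul_mul_assoc, mul_assoc, ih]
      by_cases his : i ∈ s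
      · simp [his]
      have hlt : ∀ x ∈ insert i s, a < x := by simpa [hai] using ha
      rw [if_neg his, if_neg (by simp [hai.ne', his]), mul_smul_comm,
        ← eI_insert_of_forall_lt ε hlt, Finset.insert_comm, smul_smul,
        card_filter_lt_insert has, if_pos hai, pow_succ']

/-- Left multiplication by `eᵢ`, as dictated by `epsGen_mul_eI`, on the free module with
basis the subsets of `Fin n`. -/
def wedge (i : Fin n) : (Finset (Fin n) →₀ B) →ₗ[B] (Finset (Fin n) →₀ B) :=
  Finsupp.lsum B fun I =>
    if i ∈ I then 0 else ε ^ (I.filter (· < i)).card • Finsupp.lsingle (insert i I)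

lemma wedge_single (i : Fin n) (I : Finset (Fin n)) (b : B) :
    wedge ε i (Finsupp.single I b) =
      if i ∈ I then 0 else ε ^ (I.filter (· < i)).card • Finsupp.single (insert i I) b := by
  rw [wedge, Finsupp.lsum_single]
  split_ifs <;> simp

lemma epsGen_mul_linearCombination (i : Fin n) (x : Finset (Fin n) →₀ B) :
    epsGen B n ε i * Finsupp.linearCombination B (eI B n ε) x =
      Finsupp.linearCombination B (eI B n ε) (wedge ε i x) := by
  refine LinearMap.congr_fun (Finsupp.lhom_ext (φ := LinearMap.mulLeft B (epsGen B n ε i) ∘ₗ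
    Finsupp.linearCombination B (eI B n ε))
    (ψ := Finsupp.linearCombination B (eI B n ε) ∘ₗ wedge ε i) fun I b => ?_) x
  simp only [LinearMap.comp_apply, LinearMap.mulLeft_apply, Finsupp.linearCombination_single,
    mul_smul_comm, epsGen_mul_eI, wedge_single]
  split_ifs
  · simp
  · rw [map_smul, Finsupp.linearCombination_single, smul_smul, mul_comm, smul_smul]

lemma mkAlgHom_ι (v : Fin n → B) :
    RingQuot.mkAlgHom B (epsRel B n ε) (ι B v) = ∑ i, v i • epsGen B n ε i := by
  conv_lhs => rw [← (Pi.basisFun B (Fin n)).sum_repr v]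
  simp [epsGen, stdB, map_sum, map_smul]

lemma mul_mem_range_linearCombination_eI (x : EpsExt B n ε) {y : EpsExt B n ε}
    (hy : y ∈ LinearMap.range (Finsupp.linearCombination B (eI B n ε))) :
    x * y ∈ LinearMap.range (Finsupp.linearCombination B (eI B n ε)) := by
  obtain ⟨x, rfl⟩ := RingQuot.mkAlgHom_surjective B (epsRel B n ε) x
  induction x using TensorAlgebra.induction generalizing y with
  | algebraMap r =>
    rw [AlgHom.commutes, Algebra.algebraMap_eq_smul_one, smul_one_mul]
    exact Submodule.smul_mem _ r hy
  | ι v =>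
    obtain ⟨z, rfl⟩ := hy
    rw [mkAlgHom_ι, Finset.sum_mul]
    refine Submodule.sum_mem _ fun i _ => ?_
    rw [smul_mul_assoc, epsGen_mul_linearCombination]
    exact Submodule.smul_mem _ _ ⟨_, rfl⟩
  | mul a b ha hb => rw [map_mul, mul_assoc]; exact ha (hb hy)
  | add a b ha hb => rw [map_add, add_mul]; exact Submodule.add_mem _ (ha hy) (hb hy)

lemma span_range_eI : Submodule.span B (Set.range (eI B n ε)) = ⊤ := by
  rw [← Finsupp.range_linearCombination, eq_top_iff]
  intro x _
  simpa using mul_mem_range_linearCombination_eI ε x (y := 1)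
    ⟨Finsupp.single ∅ 1, by simp [eI_empty]⟩

lemma wedge_wedge_single (i j : Fin n) (I : Finset (Fin n)) (b : B) :
    wedge ε i (wedge ε j (Finsupp.single I b)) =
      if i = j ∨ i ∈ I ∨ j ∈ I then 0
      else ε ^ ((I.filter (· < j)).card + (I.filter (· < i)).card + if j < i then 1 else 0) •
        Finsupp.single (insert i (insert j I)) b := by
  rw [wedge_single]
  by_cases hj : j ∈ I
  · simp [hj]
  by_cases hij : i = j
  · subst hij
    rw [if_neg hj, map_smul, wedge_single, if_pos (Finset.mem_insert_self _ _), smul_zero,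
      if_pos (Or.inl rfl)]
  by_cases hi : i ∈ I
  · rw [if_neg hj, map_smul, wedge_single, if_pos (Finset.mem_insert_of_mem hi), smul_zero,
      if_pos (Or.inr (Or.inl hi))]
  rw [if_neg hj, map_smul, wedge_single, if_neg (show i ∉ insert j I by simp [hij, hi]),
    card_filter_lt_insert hj, if_neg (show ¬(i = j ∨ i ∈ I ∨ j ∈ I) by tauto), smul_smul,
    ← pow_add, ← add_assoc]

lemma wedge_comp_self (i : Fin n) : wedge ε i ∘ₗ wedge ε i = 0 :=
  Finsupp.lhom_ext fun I b => by simp [wedge_wedge_single]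

lemma wedge_comp_wedge_of_ne (hε : ε ^ 2 = 1) {i j : Fin n} (h : i ≠ j) :
    wedge ε i ∘ₗ wedge ε j = ε • (wedge ε j ∘ₗ wedge ε i) := by
  refine Finsupp.lhom_ext fun I b => ?_
  simp only [LinearMap.comp_apply, LinearMap.smul_apply, wedge_wedge_single]
  by_cases hI : i ∈ I ∨ j ∈ I
  · simp [hI, or_comm]
  rw [if_neg (show ¬(i = j ∨ i ∈ I ∨ j ∈ I) by tauto),
    if_neg (show ¬(j = i ∨ j ∈ I ∨ i ∈ I) by tauto), Finset.insert_comm, smul_smul]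
  congr 1
  rcases h.lt_or_gt with hij | hji
  · simp only [hij, hij.not_gt, if_true, if_false]
    linear_combination -(ε ^ ((I.filter (· < i)).card + (I.filter (· < j)).card)) * hε
  · simp only [hji, hji.not_gt, if_true, if_false]
    ring

lemma lift_constr_wedge_ι_stdB (i : Fin n) :
    TensorAlgebra.lift B ((Pi.basisFun B (Fin n)).constr B (wedge ε)) (ι B (stdB B n i)) =
      wedge ε i := by
  rw [TensorAlgebra.lift_ι_apply, stdB, ← Pi.basisFun_apply, Module.Basis.constr_basis]

def wedgeRep (hε : ε ^ 2 = 1) : EpsExt B n ε →ₐ[B] Module.End B (Finset (Fin n) →₀ B) :=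
  RingQuot.liftAlgHom B ⟨TensorAlgebra.lift B ((Pi.basisFun B (Fin n)).constr B (wedge ε)),
    fun x y r => by
      cases r with
      | sq i =>
        simp only [map_mul, map_zero, lift_constr_wedge_ι_stdB, Module.End.mul_eq_comp,
          wedge_comp_self]
      | swap h =>
        simp only [map_mul, map_smul, lift_constr_wedge_ι_stdB, Module.End.mul_eq_comp,
          wedge_comp_wedge_of_ne ε hε h]⟩

lemma wedgeRep_epsGen (hε : ε ^ 2 = 1) (i : Fin n) :
    wedgeRep ε hε (epsGen B n ε i) = wedge ε i := by
  rw [wedgeRep, epsGen, RingQuot.liftAlgHom_mkAlgHom_apply, lift_constr_wedge_ι_stdB]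

lemma wedgeRep_eI_single_empty (hε : ε ^ 2 = 1) (I : Finset (Fin n)) :
    wedgeRep ε hε (eI B n ε I) (Finsupp.single ∅ 1) = Finsupp.single I 1 := by
  induction I using Finset.induction_on_min with
  | empty => simp [eI_empty]
  | insert a s ha ih =>
    rw [eI_insert_of_forall_lt ε ha, map_mul, Module.End.mul_apply, ih, wedgeRep_epsGen,
      wedge_single, if_neg fun h => lt_irrefl a (ha a h),
      Finset.filter_eq_empty_iff.mpr fun x hx => (ha x hx).not_gt, Finset.card_empty,
      pow_zero, one_smul]

lemma linearIndependent_eI (hε : ε ^ 2 = 1) : LinearIndependent B (eI B n ε) := by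
  have hinv : ∀ x, wedgeRep ε hε (Finsupp.linearCombination B (eI B n ε) x)
      (Finsupp.single ∅ 1) = x := by
    intro x
    induction x using Finsupp.induction_linear with
    | zero => simp
    | add x y hx hy => rw [map_add, map_add, LinearMap.add_apply, hx, hy]
    | single I b =>
      rw [Finsupp.linearCombination_single, map_smul, LinearMap.smul_apply,
        wedgeRep_eI_single_empty, Finsupp.smul_single_one]
  exact fun x y h => by rw [← hinv x, h, hinv y]

lemma epsPower_eq_span_image (d : ℕ) :
    epsPower B n ε d = Submodule.span B (eI B n ε '' {I | I.card = d}) := by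
  rw [epsPower]
  congr 1
  ext x
  simp [eq_comm]

end EpsExt

/-- Let `B` be a commutative ring with `ε² = 1` and `A` the ε-exterior
algebra of `Bⁿ`.  Then `A = ⊕_{d=0}^{n} Λᵈ` as `B`-modules, where `Λᵈ` is the span
of the `e_I` with `|I| = d`. -/
theorem stmt9 (B : Type*) [CommRing B] (n : ℕ) (ε : B) (hε : ε ^ 2 = 1) :
    DirectSum.IsInternal (fun d : Fin (n + 1) => epsPower B n ε d.val) := by
  let deg : Finset (Fin n) → Fin (n + 1) := fun I =>
    ⟨I.card, Nat.lt_succ_of_le (I.card_le_univ.trans (Fintype.card_fin n).le)⟩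
  have hfiber : (fun d : Fin (n + 1) => epsPower B n ε d.val) =
      fun d => Submodule.span B (eI B n ε '' (deg ⁻¹' {d})) := by
    ext1 d
    rw [EpsExt.epsPower_eq_span_image]
    congr 2
    ext I
    simp [deg, Fin.ext_iff]
  rw [hfiber]
  exact (EpsExt.linearIndependent_eI ε hε).isInternal_span_image_fiber
    (EpsExt.span_range_eI ε) deg
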